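/- (Key nonlinear estimate) Let $m \ge 3$, $2 \le p < \infty$. There exists $C = C(m,p) > 0$ such that for smooth divergence-free $u \in L^m(\mathbb{R}^m)$ and smooth $\omega \in W^{1,p}(\mathbb{R}^m)$ with $\omega \in L^{mp/(m-2)}$, $\big| \langle |\omega|^{p-2}\omega,\ u\cdot\nabla\omega \rangle \big| \le C \|u\|_{L^m} \, Q_p(\omega)$, where $Q_p(\omega) = \int |\omega|^{p-2}|\nabla\omega|^2 dx$. -/

import Mathlib

open MeasureTheory ENNReal RealInnerProductSpace

noncomputable section

variable {m : ℕ}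

/-- `Q_p(ω) = ∫ |ω|^{p-2} |∇ω|^2 dx`. -/
def Qp (p : ℝ) (ω : EuclideanSpace ℝ (Fin m) → EuclideanSpace ℝ (Fin m)) : ℝ :=
  ∫ x, ‖ω x‖ ^ (p - 2) * ‖fderiv ℝ ω x‖ ^ (2 : ℕ)

/-- The advection term `(u·∇ω)(x) = ∑ᵢ uᵢ(x) ∂ᵢω(x)`. -/
def advect (u ω : EuclideanSpace ℝ (Fin m) → EuclideanSpace ℝ (Fin m))
    (x : EuclideanSpace ℝ (Fin m)) : EuclideanSpace ℝ (Fin m) :=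
  ∑ i : Fin m, u x i • fderiv ℝ ω x (EuclideanSpace.single i (1 : ℝ))

namespace NLEaux

theorem sum_single_eq (v : EuclideanSpace ℝ (Fin m)) :
    ∑ i, v i • EuclideanSpace.single i (1:ℝ) = v := by
  have := (EuclideanSpace.basisFun (Fin m) ℝ).sum_repr v
  simpa [EuclideanSpace.basisFun_apply, EuclideanSpace.basisFun_repr] using this

theorem clm_sum_single (L : EuclideanSpace ℝ (Fin m) →L[ℝ] ℝ) (v : EuclideanSpace ℝ (Fin m)) :
    ∑ i, v i * L (EuclideanSpace.single i (1:ℝ)) = L v := by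
  have h1 : ∑ i : Fin m, v i * L (EuclideanSpace.single i 1)
      = L (∑ i : Fin m, v i • EuclideanSpace.single i (1:ℝ)) := by
    rw [map_sum]; simp
  rw [h1, sum_single_eq]

theorem advect_eq (u ω : EuclideanSpace ℝ (Fin m) → EuclideanSpace ℝ (Fin m)) (x) :
    advect u ω x = fderiv ℝ ω x (u x) := by
  have h1 : ∑ i : Fin m, u x i • (fderiv ℝ ω x) (EuclideanSpace.single i 1)
      = (fderiv ℝ ω x) (∑ i : Fin m, u x i • EuclideanSpace.single i (1:ℝ)) := by
    rw [map_sum]; simp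
  rw [advect, h1, sum_single_eq]

theorem integrable_mul3 {α : Type*} [MeasurableSpace α] {μ : Measure α} {f g h : α → ℝ}
    {P Q R : ℝ≥0∞} (hf : MemLp f P μ) (hg : MemLp g Q μ) (hh : MemLp h R μ)
    (hPQR : 1/P + 1/Q + 1/R = 1) :
    Integrable (fun x => f x * (g x * h x)) μ := by
  have h1 : MemLp (g • h) (1/Q + 1/R)⁻¹ μ := by
    have hT : ENNReal.HolderTriple Q R (1/Q + 1/R)⁻¹ := ⟨by rw [one_div, one_div, inv_inv]⟩
    exact hh.smul hg
  have h2 : MemLp (f • (g • h)) 1 μ := by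
    have hT : ENNReal.HolderTriple P (1/Q + 1/R)⁻¹ 1 :=
      ⟨by rw [inv_inv, inv_one, ← one_div, ← add_assoc, hPQR]⟩
    exact h1.smul hf
  have := memLp_one_iff_integrable.mp h2
  exact this

end NLEaux

set_option maxHeartbeats 1000000 in
/-- Key nonlinear estimate:
`|⟨|ω|^{p-2}ω, u·∇ω⟩| ≤ C ‖u‖_{L^m} Q_p(ω)` for divergence-free `u ∈ L^m`
and `ω ∈ W^{1,p} ∩ L^{mp/(m-2)}`. -/
theorem nonlinear_term_estimate (m : ℕ) (hm : 3 ≤ m) (p : ℝ) (hp : 2 ≤ p) :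
    ∃ C > (0 : ℝ),
      ∀ u ω : EuclideanSpace ℝ (Fin m) → EuclideanSpace ℝ (Fin m),
        ContDiff ℝ (⊤ : ℕ∞) u → ContDiff ℝ (⊤ : ℕ∞) ω →
        (∀ x, ∑ i : Fin m, fderiv ℝ u x (EuclideanSpace.single i (1 : ℝ)) i = 0) →
        MemLp u (ENNReal.ofReal (m : ℝ)) volume →
        MemLp ω (ENNReal.ofReal p) volume →
        MemLp (fun x => fderiv ℝ ω x) (ENNReal.ofReal p) volume →
        MemLp ω (ENNReal.ofReal ((m : ℝ) * p / ((m : ℝ) - 2))) volume →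
        Integrable (fun x => ‖ω x‖ ^ (p - 2) * ‖fderiv ℝ ω x‖ ^ (2 : ℕ)) volume →
        |∫ x, ‖ω x‖ ^ (p - 2) * ⟪ω x, advect u ω x⟫| ≤
          C * (eLpNorm u (ENNReal.ofReal (m : ℝ)) volume).toReal * Qp p ω := by
  refine ⟨1, one_pos, ?_⟩
  intro u ω hu hω hdiv hum hop hdp hor hQ
  have hp1 : (1:ℝ) < p := by linarith
  have hp0 : (0:ℝ) < p := by linarith
  have hm3 : (3:ℝ) ≤ (m:ℝ) := by exact_mod_cast hm
  have hmR : (0:ℝ) < (m:ℝ) - 2 := by linarith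
  have hud : Differentiable ℝ u := hu.differentiable (by simp)
  have hωd : Differentiable ℝ ω := hω.differentiable (by simp)
  set F : EuclideanSpace ℝ (Fin m) → ℝ := fun x => ‖ω x‖ ^ p with hFdef
  have hF1 : ContDiff ℝ 1 F := (contDiff_norm_rpow hp1).comp (hω.of_le (by simp))
  have hFd : Differentiable ℝ F := hF1.differentiable (by simp)
  have hFda : ∀ x, HasFDerivAt F
      ((p * ‖ω x‖ ^ (p - 2)) • ((innerSL ℝ (ω x)).comp (fderiv ℝ ω x))) x := by
    intro x
    have := (hasFDerivAt_norm_rpow (ω x) hp1).comp x (hωd x).hasFDerivAt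
    rw [← ContinuousLinearMap.smul_comp]
    exact this
  have hfderivF : ∀ x v, fderiv ℝ F x v = p * ‖ω x‖ ^ (p-2) * ⟪ω x, fderiv ℝ ω x v⟫ := by
    intro x v
    rw [(hFda x).fderiv]
    simp [mul_assoc]
  -- pointwise identity with the goal integrand
  have hpt : ∀ x, ‖ω x‖ ^ (p - 2) * ⟪ω x, advect u ω x⟫ = (1/p) * fderiv ℝ F x (u x) := by
    intro x
    rw [hfderivF, NLEaux.advect_eq]
    field_simp
  -- continuity facts
  have hcFF : Continuous (fun x => fderiv ℝ F x) := hF1.continuous_fderiv (by simp)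
  have hcFω : Continuous (fun x => fderiv ℝ ω x) := hω.continuous_fderiv (by simp)
  have hch' : Continuous (fun x => fderiv ℝ F x (u x)) := hcFF.clm_apply hu.continuous
  -- MemLp components
  have hA : MemLp (fun x => ‖u x‖) (ENNReal.ofReal (m:ℝ)) volume := hum.norm
  have hBcont : Continuous (fun x => ‖ω x‖ ^ ((p-2)/2) * ‖fderiv ℝ ω x‖) :=
    ((hω.continuous.norm).rpow_const (fun x => Or.inr (by linarith))).mul hcFω.norm
  have hB : MemLp (fun x => ‖ω x‖ ^ ((p-2)/2) * ‖fderiv ℝ ω x‖) 2 volume := by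
    rw [memLp_two_iff_integrable_sq hBcont.aestronglyMeasurable]
    have e : (fun x => (‖ω x‖ ^ ((p-2)/2) * ‖fderiv ℝ ω x‖)^2)
        = fun x => ‖ω x‖ ^ (p - 2) * ‖fderiv ℝ ω x‖ ^ (2:ℕ) := by
      funext x
      rw [mul_pow, ← Real.rpow_natCast (‖ω x‖ ^ ((p-2)/2)) 2,
        ← Real.rpow_mul (norm_nonneg _),
        show (p-2)/2 * ((2:ℕ):ℝ) = p - 2 by push_cast; ring]
    rw [e]; exact hQ
  have hCr : MemLp (fun x => ‖ω x‖ ^ (p/2))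
      (ENNReal.ofReal (2*(m:ℝ)/((m:ℝ)-2))) volume := by
    have h0 := hor.norm_rpow_div (ENNReal.ofReal (p/2))
    rw [ENNReal.toReal_ofReal (by positivity)] at h0
    convert h0 using 2
    rw [← ENNReal.ofReal_div_of_pos (by positivity)]
    congr 1
    field_simp
  have hC2 : MemLp (fun x => ‖ω x‖ ^ (p/2)) 2 volume := by
    have h0 := hop.norm_rpow_div (ENNReal.ofReal (p/2))
    rw [ENNReal.toReal_ofReal (by positivity)] at h0
    convert h0 using 1
    rw [← ENNReal.ofReal_div_of_pos (by positivity)]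
    rw [show p / (p/2) = 2 by field_simp]
    norm_num
  have hexp : 1/(ENNReal.ofReal (m:ℝ)) + 1/(2:ℝ≥0∞)
      + 1/(ENNReal.ofReal (2*(m:ℝ)/((m:ℝ)-2))) = 1 := by
    have h2 : (2:ℝ≥0∞) = ENNReal.ofReal 2 := by norm_num
    simp only [one_div, h2]
    rw [← ENNReal.ofReal_inv_of_pos (by positivity),
      ← ENNReal.ofReal_inv_of_pos (by positivity),
      ← ENNReal.ofReal_inv_of_pos (by positivity),
      ← ENNReal.ofReal_add (by positivity) (by positivity),
      ← ENNReal.ofReal_add (by positivity) (by positivity)]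
    rw [show ((m:ℝ))⁻¹ + (2:ℝ)⁻¹ + (2*(m:ℝ)/((m:ℝ)-2))⁻¹ = 1 by field_simp; ring]
    norm_num
  have hMaj1 : Integrable (fun x => ‖u x‖ *
      ((‖ω x‖ ^ ((p-2)/2) * ‖fderiv ℝ ω x‖) * ‖ω x‖ ^ (p/2))) volume :=
    NLEaux.integrable_mul3 hA hB hCr hexp
  have hMaj2 : Integrable (fun x => ‖u x‖ * (‖ω x‖ ^ (p/2) * ‖ω x‖ ^ (p/2))) volume :=
    NLEaux.integrable_mul3 hA hC2 hCr hexp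
  -- splitting identities
  have hsplit : ∀ t : ℝ, 0 ≤ t → t ^ (p-2) * t = t ^ ((p-2)/2) * t ^ (p/2) := by
    intro t ht
    rcases ht.lt_or_eq with h0 | h0
    · calc t ^ (p-2) * t = t ^ (p-2) * t ^ (1:ℝ) := by rw [Real.rpow_one]
        _ = t ^ (p-2+1) := (Real.rpow_add h0 _ _).symm
        _ = t ^ ((p-2)/2 + p/2) := by ring_nf
        _ = t ^ ((p-2)/2) * t ^ (p/2) := Real.rpow_add h0 _ _
    · rw [← h0, Real.zero_rpow (by positivity : p/2 ≠ 0)]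
      ring
  have hsplit2 : ∀ t : ℝ, 0 ≤ t → t ^ p = t ^ (p/2) * t ^ (p/2) := by
    intro t ht
    have h1 : t^(p/2) * t^(p/2) = t^(p/2+p/2) :=
      (Real.rpow_add' ht (by nlinarith : (0:ℝ) < p/2+p/2).ne').symm
    rw [h1, show p/2+p/2 = p by ring]
  -- integrability of h'
  have hInt_h' : Integrable (fun x => fderiv ℝ F x (u x)) volume := by
    refine (hMaj1.const_mul p).mono' hch'.aestronglyMeasurable ?_
    filter_upwards with x
    rw [hfderivF]
    have h1 : |⟪ω x, fderiv ℝ ω x (u x)⟫| ≤ ‖ω x‖ * (‖fderiv ℝ ω x‖ * ‖u x‖) := by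
      refine (abs_real_inner_le_norm _ _).trans ?_
      exact mul_le_mul_of_nonneg_left
        (((fderiv ℝ ω x).le_opNorm (u x))) (norm_nonneg _)
    have hnn : (0:ℝ) ≤ ‖ω x‖ ^ (p-2) := by positivity
    calc ‖p * ‖ω x‖^(p-2) * ⟪ω x, fderiv ℝ ω x (u x)⟫‖
        = p * ‖ω x‖^(p-2) * |⟪ω x, fderiv ℝ ω x (u x)⟫| := by
          rw [Real.norm_eq_abs, abs_mul, abs_mul, abs_of_pos hp0, abs_of_nonneg hnn]
      _ ≤ p * ‖ω x‖^(p-2) * (‖ω x‖ * (‖fderiv ℝ ω x‖ * ‖u x‖)) := by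
          exact mul_le_mul_of_nonneg_left h1 (by positivity)
      _ = p * (‖u x‖ * ((‖ω x‖ ^ ((p-2)/2) * ‖fderiv ℝ ω x‖) * ‖ω x‖ ^ (p/2))) := by
          rw [show p * ‖ω x‖^(p-2) * (‖ω x‖ * (‖fderiv ℝ ω x‖ * ‖u x‖))
            = p * ((‖ω x‖^(p-2) * ‖ω x‖) * (‖fderiv ℝ ω x‖ * ‖u x‖)) from by ring,
            hsplit _ (norm_nonneg _)]
          ring
  have hIntuF : Integrable (fun x => ‖u x‖ * F x) volume := by
    have e : (fun x => ‖u x‖ * F x)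
        = fun x => ‖u x‖ * (‖ω x‖ ^ (p/2) * ‖ω x‖ ^ (p/2)) := by
      funext x
      rw [hFdef]
      simp only
      rw [hsplit2 _ (norm_nonneg _)]
    rw [e]; exact hMaj2
  -- cutoff functions
  set χ : ContDiffBump (0 : EuclideanSpace ℝ (Fin m)) := ⟨1, 2, one_pos, one_lt_two⟩ with hχdef
  have hχsm : ContDiff ℝ ((⊤ : ℕ∞) : WithTop ℕ∞) (⇑χ) := χ.contDiff
  have hχcs : HasCompactSupport (⇑χ) := χ.hasCompactSupport
  obtain ⟨y0, hy0⟩ := ((hχsm.continuous_fderiv (by norm_num)).norm).exists_forall_ge_of_hasCompactSupport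
    ((hχcs.fderiv (𝕜 := ℝ)).comp_left (g := fun L => ‖L‖) norm_zero)
  set K : ℝ := ‖fderiv ℝ (⇑χ) y0‖ with hKdef
  have hK0 : 0 ≤ K := norm_nonneg _
  set c : ℕ → ℝ := fun n => ((n:ℝ)+1)⁻¹ with hcdef
  have hc0 : ∀ n, 0 < c n := fun n => by positivity
  have hc1 : ∀ n, c n ≤ 1 := by
    intro n
    rw [hcdef]
    simp only
    rw [inv_le_one_iff₀]
    right; linarith [Nat.cast_nonneg (α := ℝ) n]
  set χn : ℕ → EuclideanSpace ℝ (Fin m) → ℝ := fun n x => χ (c n • x) with hχndef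
  have hχn_sm : ∀ n, ContDiff ℝ ((⊤ : ℕ∞) : WithTop ℕ∞) (χn n) := fun n => hχsm.comp (contDiff_id.const_smul (c n))
  have hχn_cs : ∀ n, HasCompactSupport (χn n) := fun n => hχcs.comp_smul (hc0 n).ne'
  have hχn_nonneg : ∀ n x, 0 ≤ χn n x := fun n x => χ.nonneg
  have hχn_le1 : ∀ n x, χn n x ≤ 1 := fun n x => χ.le_one
  have hχn_one : ∀ (n : ℕ) (x : EuclideanSpace ℝ (Fin m)), ‖x‖ ≤ (n:ℝ)+1 → χn n x = 1 := by
    intro n x hx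
    refine χ.one_of_mem_closedBall ?_
    rw [Metric.mem_closedBall, dist_zero_right, norm_smul, Real.norm_eq_abs,
      abs_of_pos (hc0 n)]
    calc c n * ‖x‖ ≤ c n * ((n:ℝ)+1) := by
          exact mul_le_mul_of_nonneg_left hx (hc0 n).le
      _ = 1 := by
          rw [hcdef]
          field_simp
  have hχn_fd : ∀ n x, HasFDerivAt (χn n)
      ((fderiv ℝ (⇑χ) (c n • x)).comp
        ((c n) • ContinuousLinearMap.id ℝ (EuclideanSpace ℝ (Fin m)))) x := by
    intro n x
    have h1 : HasFDerivAt (fun y : EuclideanSpace ℝ (Fin m) => c n • y)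
        ((c n) • ContinuousLinearMap.id ℝ (EuclideanSpace ℝ (Fin m))) x :=
      (hasFDerivAt_id x).const_smul (c n)
    exact (((hχsm.differentiable (by norm_num)) (c n • x)).hasFDerivAt).comp x h1
  have hχn_fd_norm : ∀ n x, ‖fderiv ℝ (χn n) x‖ ≤ K := by
    intro n x
    rw [(hχn_fd n x).fderiv]
    refine (ContinuousLinearMap.opNorm_comp_le _ _).trans ?_
    have h2 : ‖(c n) • ContinuousLinearMap.id ℝ (EuclideanSpace ℝ (Fin m))‖ ≤ 1 := by
      refine ContinuousLinearMap.opNorm_le_bound _ zero_le_one ?_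
      intro y
      simp only [ContinuousLinearMap.smul_apply, ContinuousLinearMap.id_apply, norm_smul,
        Real.norm_eq_abs, abs_of_pos (hc0 n), one_mul]
      nlinarith [norm_nonneg y, hc1 n, (hc0 n).le]
    calc ‖fderiv ℝ (⇑χ) (c n • x)‖ * ‖(c n) • ContinuousLinearMap.id ℝ (EuclideanSpace ℝ (Fin m))‖
        ≤ K * 1 := mul_le_mul (hy0 _) h2 (norm_nonneg _) hK0
      _ = K := mul_one K
  have hχn_fd_zero : ∀ (x : EuclideanSpace ℝ (Fin m)) (n : ℕ), ‖x‖ < (n:ℝ)+1 →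
      fderiv ℝ (χn n) x = 0 := by
    intro x n hx
    have hopen : IsOpen {y : EuclideanSpace ℝ (Fin m) | ‖y‖ < (n:ℝ)+1} :=
      isOpen_lt continuous_norm continuous_const
    have hev : χn n =ᶠ[nhds x] (fun _ => (1:ℝ)) := by
      filter_upwards [hopen.mem_nhds hx] with y hy
      exact hχn_one n y (le_of_lt hy)
    rw [hev.fderiv_eq]
    exact fderiv_const_apply 1
  -- per-coordinate integrability
  have hui_sm : ∀ i : Fin m, ContDiff ℝ ((⊤ : ℕ∞) : WithTop ℕ∞) (fun y => u y i) := fun i =>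
    ((EuclideanSpace.proj (𝕜 := ℝ) i).contDiff).comp (hu.of_le (by simp))
  have hf_sm : ∀ n (i : Fin m), ContDiff ℝ ((⊤ : ℕ∞) : WithTop ℕ∞) (fun y => u y i * χn n y) := fun n i =>
    (hui_sm i).mul (hχn_sm n)
  have hf_cs : ∀ n (i : Fin m), HasCompactSupport (fun y => u y i * χn n y) := fun n i =>
    (hχn_cs n).mul_left
  -- integration by parts per n, i
  have hibp : ∀ (n : ℕ) (i : Fin m),
      (∫ x, (u x i * χn n x) * fderiv ℝ F x (EuclideanSpace.single i 1))
      = - ∫ x, fderiv ℝ (fun y => u y i * χn n y) x (EuclideanSpace.single i 1) * F x := by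
    intro n i
    refine integral_mul_fderiv_eq_neg_fderiv_mul_of_integrable ?_ ?_ ?_
      (fun x _ => (hf_sm n i).differentiable (by norm_num) x) (fun x _ => hFd x)
    · refine Continuous.integrable_of_hasCompactSupport ?_ ?_
      · exact (((hf_sm n i).continuous_fderiv (by norm_num)).clm_apply continuous_const).mul
          hF1.continuous
      · exact ((hf_cs n i).fderiv_apply (𝕜 := ℝ) _).mul_right
    · refine Continuous.integrable_of_hasCompactSupport ?_ ?_
      · exact ((hf_sm n i).continuous).mul (hcFF.clm_apply continuous_const)
      · exact (hf_cs n i).mul_right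
    · refine Continuous.integrable_of_hasCompactSupport ?_ ?_
      · exact ((hf_sm n i).continuous).mul hF1.continuous
      · exact (hf_cs n i).mul_right
  -- per-i integrability (again, for sum manipulations)
  have hIL : ∀ n (i : Fin m), Integrable
      (fun x => (u x i * χn n x) * fderiv ℝ F x (EuclideanSpace.single i 1)) volume := by
    intro n i
    refine Continuous.integrable_of_hasCompactSupport ?_ ?_
    · exact ((hf_sm n i).continuous).mul (hcFF.clm_apply continuous_const)
    · exact (hf_cs n i).mul_right
  have hIR : ∀ n (i : Fin m), Integrable
      (fun x => fderiv ℝ (fun y => u y i * χn n y) x (EuclideanSpace.single i 1) * F x)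
      volume := by
    intro n i
    refine Continuous.integrable_of_hasCompactSupport ?_ ?_
    · exact (((hf_sm n i).continuous_fderiv (by norm_num)).clm_apply continuous_const).mul
        hF1.continuous
    · exact ((hf_cs n i).fderiv_apply (𝕜 := ℝ) _).mul_right
  -- summed identity
  have hAn : ∀ n, (∫ x, χn n x * fderiv ℝ F x (u x))
      = - ∫ x, fderiv ℝ (χn n) x (u x) * F x := by
    intro n
    have hL : (∫ x, χn n x * fderiv ℝ F x (u x))
        = ∑ i, ∫ x, (u x i * χn n x) * fderiv ℝ F x (EuclideanSpace.single i 1) := by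
      rw [← integral_finset_sum _ (fun i _ => hIL n i)]
      congr 1
      funext x
      rw [← NLEaux.clm_sum_single (fderiv ℝ F x) (u x), Finset.mul_sum]
      exact Finset.sum_congr rfl fun i _ => by ring
    have hmul : ∀ (x : EuclideanSpace ℝ (Fin m)) (i : Fin m),
        fderiv ℝ (fun y => u y i * χn n y) x (EuclideanSpace.single i 1)
        = u x i * fderiv ℝ (χn n) x (EuclideanSpace.single i 1)
          + χn n x * (fderiv ℝ u x (EuclideanSpace.single i 1) i) := by
      intro x i
      have hD1 : DifferentiableAt ℝ (fun y => u y i) x :=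
        ((hui_sm i).differentiable (by norm_num)) x
      have hD2 : DifferentiableAt ℝ (χn n) x :=
        ((hχn_sm n).differentiable (by norm_num)) x
      rw [fderiv_fun_mul hD1 hD2]
      have hproj : fderiv ℝ (fun y => u y i) x
          = (EuclideanSpace.proj (𝕜 := ℝ) i).comp (fderiv ℝ u x) :=
        ((EuclideanSpace.proj (𝕜 := ℝ) i).hasFDerivAt.comp x (hud x).hasFDerivAt).fderiv
      simp only [ContinuousLinearMap.add_apply, ContinuousLinearMap.smul_apply, smul_eq_mul,
        hproj, ContinuousLinearMap.comp_apply]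
      ring_nf
      rfl
    have hR : (∫ x, fderiv ℝ (χn n) x (u x) * F x)
        = ∑ i, ∫ x, fderiv ℝ (fun y => u y i * χn n y) x (EuclideanSpace.single i 1) * F x := by
      rw [← integral_finset_sum _ (fun i _ => hIR n i)]
      congr 1
      funext x
      have hsum : ∑ i, fderiv ℝ (fun y => u y i * χn n y) x (EuclideanSpace.single i 1)
          = fderiv ℝ (χn n) x (u x) := by
        rw [Finset.sum_congr rfl (fun i _ => hmul x i), Finset.sum_add_distrib,
          NLEaux.clm_sum_single (fderiv ℝ (χn n) x) (u x), ← Finset.mul_sum, hdiv x,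
          mul_zero, add_zero]
      rw [← hsum, Finset.sum_mul]
    rw [hL, hR, Finset.sum_congr rfl fun i _ => hibp n i]
    rw [← Finset.sum_neg_distrib]
  -- limit of the left-hand sides
  have hTend1 : Filter.Tendsto (fun n => ∫ x, χn n x * fderiv ℝ F x (u x)) Filter.atTop
      (nhds (∫ x, fderiv ℝ F x (u x))) := by
    refine tendsto_integral_of_dominated_convergence (fun x => |fderiv ℝ F x (u x)|)
      (fun n => (((hχn_sm n).continuous).mul hch').aestronglyMeasurable) hInt_h'.abs ?_ ?_
    · intro n
      filter_upwards with x
      rw [Real.norm_eq_abs, abs_mul]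
      calc |χn n x| * |fderiv ℝ F x (u x)| ≤ 1 * |fderiv ℝ F x (u x)| := by
            refine mul_le_mul_of_nonneg_right ?_ (abs_nonneg _)
            rw [abs_of_nonneg (hχn_nonneg n x)]
            exact hχn_le1 n x
        _ = |fderiv ℝ F x (u x)| := one_mul _
    · filter_upwards with x
      refine Filter.Tendsto.congr' ?_ tendsto_const_nhds
      filter_upwards [Filter.eventually_atTop.2 ⟨⌈‖x‖⌉₊, fun n hn => hn⟩] with n hn
      have hx : ‖x‖ ≤ (n:ℝ)+1 := by
        calc ‖x‖ ≤ (⌈‖x‖⌉₊:ℝ) := Nat.le_ceil _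
          _ ≤ (n:ℝ) := by exact_mod_cast hn
          _ ≤ (n:ℝ)+1 := by linarith
      rw [hχn_one n x hx, one_mul]
  -- limit of the right-hand sides
  have hTend2 : Filter.Tendsto (fun n => ∫ x, fderiv ℝ (χn n) x (u x) * F x) Filter.atTop
      (nhds 0) := by
    have h0 : Filter.Tendsto (fun n => ∫ x, fderiv ℝ (χn n) x (u x) * F x) Filter.atTop
        (nhds (∫ (_ : EuclideanSpace ℝ (Fin m)), (0:ℝ) ∂volume)) := by
      refine tendsto_integral_of_dominated_convergence (fun x => K * (‖u x‖ * F x))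
        (fun n => ((((hχn_sm n).continuous_fderiv (by norm_num)).clm_apply
          hu.continuous).mul hF1.continuous).aestronglyMeasurable)
        (hIntuF.const_mul K) ?_ ?_
      · intro n
        filter_upwards with x
        have hFnn : 0 ≤ F x := by rw [hFdef]; positivity
        rw [Real.norm_eq_abs, abs_mul, abs_of_nonneg hFnn]
        calc |fderiv ℝ (χn n) x (u x)| * F x
            ≤ (K * ‖u x‖) * F x := by
              refine mul_le_mul_of_nonneg_right ?_ hFnn
              calc |fderiv ℝ (χn n) x (u x)| ≤ ‖fderiv ℝ (χn n) x‖ * ‖u x‖ := by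
                    rw [← Real.norm_eq_abs]
                    exact (fderiv ℝ (χn n) x).le_opNorm (u x)
                _ ≤ K * ‖u x‖ := mul_le_mul_of_nonneg_right (hχn_fd_norm n x) (norm_nonneg _)
          _ = K * (‖u x‖ * F x) := by ring
      · filter_upwards with x
        refine Filter.Tendsto.congr' ?_ tendsto_const_nhds
        filter_upwards [Filter.eventually_atTop.2 ⟨⌈‖x‖⌉₊, fun n hn => hn⟩] with n hn
        have hx : ‖x‖ < (n:ℝ)+1 := by
          calc ‖x‖ ≤ (⌈‖x‖⌉₊:ℝ) := Nat.le_ceil _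
            _ ≤ (n:ℝ) := by exact_mod_cast hn
            _ < (n:ℝ)+1 := by linarith
        rw [hχn_fd_zero x n hx]
        simp
    rw [integral_zero] at h0
    exact h0
  -- the integral vanishes
  have hI0 : (∫ x, fderiv ℝ F x (u x)) = 0 := by
    have h2 : Filter.Tendsto (fun n => ∫ x, χn n x * fderiv ℝ F x (u x)) Filter.atTop
        (nhds 0) := by
      have h3 := hTend2.neg
      rw [neg_zero] at h3
      exact h3.congr fun n => (hAn n).symm
    exact tendsto_nhds_unique hTend1 h2
  have hEq : (∫ x, ‖ω x‖ ^ (p - 2) * ⟪ω x, advect u ω x⟫) = 0 := by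
    have e : (fun x => ‖ω x‖ ^ (p - 2) * ⟪ω x, advect u ω x⟫)
        = fun x => (1/p) * fderiv ℝ F x (u x) := funext hpt
    rw [e, integral_const_mul, hI0, mul_zero]
  rw [hEq, abs_zero, one_mul]
  have h2 : 0 ≤ Qp p ω := integral_nonneg fun x => by positivity
  exact mul_nonneg ENNReal.toReal_nonneg h2
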